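/- Set x_i = i for i = 0, 1, 2, 3, 4, 5, and let x_6 be any real number with x_6 > 5. Then d_{0,1}·d_{2,3}·d_{3,4}·d_{5,6} < d_{1,2}·d_{4,5}·d_{0,3}·d_{3,6} (where d_{i,j} = x_j − x_i); consequently there exist no real numbers y_0, …, y_6 such that the terrain with points p_i = (x_i, y_i) has visibility graph exactly G'. -/

import Mathlib

/-- `p j` is strictly below the segment `p i p k`. -/
def StrictlyBelow {n : ℕ} (x y : Fin n → ℝ) (i j k : Fin n) : Prop :=
  (x k - x j) * y i - (x k - x i) * y j + (x j - x i) * y k > 0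

/-- `p j` is strictly above the segment `p i p k`. -/
def StrictlyAbove {n : ℕ} (x y : Fin n → ℝ) (i j k : Fin n) : Prop :=
  (x k - x j) * y i - (x k - x i) * y j + (x j - x i) * y k < 0

/-- `p j` lies on or above the segment `p i p k`. -/
def OnOrAbove {n : ℕ} (x y : Fin n → ℝ) (i j k : Fin n) : Prop :=
  (x k - x j) * y i - (x k - x i) * y j + (x j - x i) * y k ≤ 0

/-- For `i < k`, the points `p i` and `p k` see each other. -/
def Sees {n : ℕ} (x y : Fin n → ℝ) (i k : Fin n) : Prop :=
  (k : ℕ) = (i : ℕ) + 1 ∨ ∀ j : Fin n, i < j → j < k → StrictlyBelow x y i j k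

/-- The visibility graph of the terrain, as a symmetric relation. -/
def VisGraph {n : ℕ} (x y : Fin n → ℝ) (i k : Fin n) : Prop :=
  (i < k ∧ Sees x y i k) ∨ (k < i ∧ Sees x y k i)

/-- The edges `{i,k}` (with `i < k`) of the graph `G'` on `{0,…,6}`. -/
def GpEdge (i k : ℕ) : Prop :=
  (i, k) ∈ [(0,1),(1,2),(2,3),(3,4),(4,5),(5,6),
            (0,3),(0,4),(0,5),(0,6),(1,3),(1,6),(2,6),(3,5),(3,6)]

/-!
An edge `{i, k}` of a terrain's visibility graph puts every intermediate point strictly below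
`p_i p_k`, while a non-edge `{i, l}` is blocked by some intermediate point lying on or above
`p_i p_l`. If moreover `i` sees `k` and `k` sees `l`, then `p_k` itself blocks `p_i p_l`: a
blocker left of `k` lies below `p_i p_k` but on or above `p_i p_l`, so the slope from `p_i` to
`p_k` is at least the slope from `p_i` to `p_l`; symmetrically for a blocker right of `k`.

For `G'` this gives six linear constraints on `y`: `p_3` is strictly below `p_0 p_4` and
`p_2 p_6`, while `p_1`, `p_5`, `p_3`, `p_3` are on or above `p_0 p_2`, `p_4 p_6`, `p_1 p_4`,
`p_1 p_5`. With `x_i = i` for `i ≤ 5`, a combination of them with positive weights linear in `x_6`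
vanishes identically, which is absurd.
-/

section Terrain

variable {n : ℕ} {x y : Fin n → ℝ} {i j k l : Fin n}

theorem Sees.strictlyBelow (h : Sees x y i k) (hij : i < j) (hjk : j < k) :
    StrictlyBelow x y i j k := by
  rcases h with h | h
  · rw [Fin.lt_def] at hij hjk
    omega
  · exact h j hij hjk

theorem exists_onOrAbove_of_not_sees (h : ¬ Sees x y i k) :
    ∃ j, i < j ∧ j < k ∧ OnOrAbove x y i j k := by
  simp only [Sees, StrictlyBelow, not_or, not_forall, not_lt] at h
  obtain ⟨-, j, hij, hjk, hj⟩ := h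
  exact ⟨j, hij, hjk, hj⟩

theorem OnOrAbove.of_strictlyBelow_left (hij : x i < x j) (hik : x i < x k) (hil : x i < x l)
    (hjk : StrictlyBelow x y i j k) (hjl : OnOrAbove x y i j l) : OnOrAbove x y i k l := by
  unfold StrictlyBelow at hjk
  unfold OnOrAbove at hjl ⊢
  nlinarith [mul_pos (sub_pos.2 hil) hjk, mul_le_mul_of_nonneg_left hjl (sub_pos.2 hik).le]

theorem OnOrAbove.of_strictlyBelow_right (hil : x i < x l) (hjl : x j < x l) (hkl : x k < x l)
    (hkj : StrictlyBelow x y k j l) (hij : OnOrAbove x y i j l) : OnOrAbove x y i k l := by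
  unfold StrictlyBelow at hkj
  unfold OnOrAbove at hij ⊢
  nlinarith [mul_pos (sub_pos.2 hil) hkj, mul_le_mul_of_nonneg_left hij (sub_pos.2 hkl).le]

theorem onOrAbove_of_sees_of_sees_of_not_sees (hx : StrictMono x) (hik : i < k) (hkl : k < l)
    (hsik : Sees x y i k) (hskl : Sees x y k l) (hsil : ¬ Sees x y i l) :
    OnOrAbove x y i k l := by
  obtain ⟨j, hij, hjl, hj⟩ := exists_onOrAbove_of_not_sees hsil
  rcases lt_trichotomy j k with hjk | rfl | hkj
  · exact hj.of_strictlyBelow_left (hx hij) (hx hik) (hx (hik.trans hkl))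
      (hsik.strictlyBelow hij hjk)
  · exact hj
  · exact hj.of_strictlyBelow_right (hx (hik.trans hkl)) (hx hjl) (hx hkl)
      (hskl.strictlyBelow hkj hjl)

end Terrain

theorem integer_prefix_constraints_inconsistent {x y : Fin 7 → ℝ}
    (h0 : x 0 = 0) (h1 : x 1 = 1) (h2 : x 2 = 2) (h3 : x 3 = 3) (h4 : x 4 = 4) (h5 : x 5 = 5)
    (h6 : 4 < x 6)
    (h034 : StrictlyBelow x y 0 3 4) (h236 : StrictlyBelow x y 2 3 6)
    (h012 : OnOrAbove x y 0 1 2) (h456 : OnOrAbove x y 4 5 6)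
    (h134 : OnOrAbove x y 1 3 4) (h135 : OnOrAbove x y 1 3 5) : False := by
  unfold StrictlyBelow at h034 h236
  unfold OnOrAbove at h012 h456 h134 h135
  rw [h0, h1, h2, h3, h4, h5] at *
  -- The weights `2(t-3), 2, 2(t-3), 2, 2(t-2), t-4` (with `t = x 6`) cancel every `y i`.
  nlinarith [mul_pos (by linarith : (0 : ℝ) < 2 * (x 6 - 3)) h034,
    mul_le_mul_of_nonneg_left h012 (by linarith : (0 : ℝ) ≤ 2 * (x 6 - 3)),
    mul_le_mul_of_nonneg_left h134 (by linarith : (0 : ℝ) ≤ 2 * (x 6 - 2)),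
    mul_le_mul_of_nonneg_left h135 (by linarith : (0 : ℝ) ≤ x 6 - 4)]

theorem Gp_not_extendable_from_integer_prefix (x : Fin 7 → ℝ)
    (h0 : x 0 = 0) (h1 : x 1 = 1) (h2 : x 2 = 2) (h3 : x 3 = 3)
    (h4 : x 4 = 4) (h5 : x 5 = 5) (h6 : 5 < x 6) :
    (x 1 - x 0) * (x 3 - x 2) * (x 4 - x 3) * (x 6 - x 5) <
      (x 2 - x 1) * (x 5 - x 4) * (x 3 - x 0) * (x 6 - x 3) ∧
    ¬ ∃ y : Fin 7 → ℝ, ∀ i k : Fin 7, i < k → (Sees x y i k ↔ GpEdge (i : ℕ) (k : ℕ)) := by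
  refine ⟨by rw [h0, h1, h2, h3, h4, h5]; linarith, ?_⟩
  rintro ⟨y, hy⟩
  have hx : StrictMono x := by
    refine Fin.strictMono_iff_lt_succ.2 fun i => ?_
    fin_cases i <;> simp [h0, h1, h2, h3, h4, h5, h6] <;> norm_num
  have edge (i k : Fin 7) (hik : i < k) (he : GpEdge i k) : Sees x y i k := (hy i k hik).2 he
  have nonedge (i k : Fin 7) (hik : i < k) (he : ¬ GpEdge i k) : ¬ Sees x y i k :=
    fun hs => he ((hy i k hik).1 hs)
  have h13 : Sees x y 1 3 := edge 1 3 (by decide) (by simp [GpEdge])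
  have h034 : StrictlyBelow x y 0 3 4 :=
    (edge 0 4 (by decide) (by simp [GpEdge])).strictlyBelow (by decide) (by decide)
  have h236 : StrictlyBelow x y 2 3 6 :=
    (edge 2 6 (by decide) (by simp [GpEdge])).strictlyBelow (by decide) (by decide)
  have h012 : OnOrAbove x y 0 1 2 := onOrAbove_of_sees_of_sees_of_not_sees hx (by decide)
    (by decide) (.inl rfl) (.inl rfl) (nonedge 0 2 (by decide) (by simp [GpEdge]))
  have h456 : OnOrAbove x y 4 5 6 := onOrAbove_of_sees_of_sees_of_not_sees hx (by decide)
    (by decide) (.inl rfl) (.inl rfl) (nonedge 4 6 (by decide) (by simp [GpEdge]))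
  have h134 : OnOrAbove x y 1 3 4 := onOrAbove_of_sees_of_sees_of_not_sees hx (by decide)
    (by decide) h13 (.inl rfl) (nonedge 1 4 (by decide) (by simp [GpEdge]))
  have h135 : OnOrAbove x y 1 3 5 := onOrAbove_of_sees_of_sees_of_not_sees hx (by decide)
    (by decide) h13 (edge 3 5 (by decide) (by simp [GpEdge]))
    (nonedge 1 5 (by decide) (by simp [GpEdge]))
  exact integer_prefix_constraints_inconsistent h0 h1 h2 h3 h4 h5 (by linarith)
    h034 h236 h012 h456 h134 h135
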